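/- Let n ≥ 2 and let μ be an edge-subgraph independent probability distribution on the simple graphs with vertex set {1,...,n} in which every unordered pair e of distinct vertices satisfies Pr[X_e] > 3/4. Then a graph sampled from μ is connected with positive probability. -/
import Mathlib


open scoped Classical

noncomputable def pr {n : ℕ} (μ : SimpleGraph (Fin n) → ℝ) (P : SimpleGraph (Fin n) → Prop) : ℝ :=
  ∑ G : SimpleGraph (Fin n), if P G then μ G else 0

def IsDist {n : ℕ} (μ : SimpleGraph (Fin n) → ℝ) : Prop :=
  (∀ G, 0 ≤ μ G) ∧ ∑ G : SimpleGraph (Fin n), μ G = 1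

def EdgeSubgraphIndep {n : ℕ} (μ : SimpleGraph (Fin n) → ℝ) : Prop :=
  ∀ u v : Fin n, u ≠ v → ∀ W : Set (Fin n), u ∉ W → v ∉ W →
    ∀ H : SimpleGraph W,
      pr μ (fun G => G.induce W = H ∧ G.Adj u v)
        = pr μ (fun G => G.induce W = H) * pr μ (fun G => G.Adj u v)

section Aux

variable {n : ℕ} (μ : SimpleGraph (Fin n) → ℝ)

lemma pr_congr {P R : SimpleGraph (Fin n) → Prop} (h : ∀ G, P G ↔ R G) :
    pr μ P = pr μ R := by
  unfold pr
  exact Finset.sum_congr rfl fun G _ => if_congr (h G) rfl rfl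

lemma pr_mono (h0 : ∀ G, 0 ≤ μ G) {P R : SimpleGraph (Fin n) → Prop}
    (h : ∀ G, P G → R G) : pr μ P ≤ pr μ R := by
  apply Finset.sum_le_sum
  intro G _
  by_cases hP : P G
  · simp [hP, h G hP]
  · simp only [hP, if_false]
    split <;> simp [h0 G]

lemma pr_true (hsum : ∑ G : SimpleGraph (Fin n), μ G = 1) :
    pr μ (fun _ => True) = 1 := by
  unfold pr; simpa using hsum

lemma pr_split (P R : SimpleGraph (Fin n) → Prop) :
    pr μ P = pr μ (fun G => P G ∧ R G) + pr μ (fun G => P G ∧ ¬ R G) := by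
  unfold pr
  rw [← Finset.sum_add_distrib]
  apply Finset.sum_congr rfl
  intro G _
  by_cases hP : P G <;> by_cases hR : R G <;> simp [hP, hR]

lemma pr_group (W : Set (Fin n)) (Q : SimpleGraph W → Prop) (R : SimpleGraph (Fin n) → Prop) :
    pr μ (fun G => Q (G.induce W) ∧ R G)
      = ∑ H : SimpleGraph W, if Q H then pr μ (fun G => G.induce W = H ∧ R G) else 0 := by
  unfold pr
  trans (∑ H : SimpleGraph W, ∑ G : SimpleGraph (Fin n),
      if Q H then (if G.induce W = H ∧ R G then μ G else 0) else 0)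
  · rw [Finset.sum_comm]
    apply Finset.sum_congr rfl
    intro G _
    rw [Finset.sum_eq_single (G.induce W)]
    · by_cases hQ : Q (G.induce W) <;> by_cases hR : R G <;> simp [hQ, hR]
    · intro H _ hne
      have hne2 : ¬(G.induce W = H ∧ R G) := by
        rintro ⟨h2, -⟩; exact hne h2.symm
      simp [hne2]
    · intro h; exact absurd (Finset.mem_univ _) h
  · apply Finset.sum_congr rfl
    intro H _
    by_cases hQ : Q H <;> simp [hQ]
    apply Finset.sum_congr rfl
    intro G _
    by_cases hc : G.induce W = H ∧ R G <;> simp [hc]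

lemma indep_Q (hind : EdgeSubgraphIndep μ) {u v : Fin n} (huv : u ≠ v)
    {W : Set (Fin n)} (hu : u ∉ W) (hv : v ∉ W) (Q : SimpleGraph W → Prop) :
    pr μ (fun G => Q (G.induce W) ∧ G.Adj u v)
      = pr μ (fun G => Q (G.induce W)) * pr μ (fun G => G.Adj u v) := by
  have h2 : pr μ (fun G => Q (G.induce W))
      = ∑ H : SimpleGraph W, if Q H then pr μ (fun G => G.induce W = H) else 0 := by
    have h3 := pr_group μ W Q (fun _ => True)
    simpa using h3
  rw [pr_group μ W Q (fun G => G.Adj u v), h2, Finset.sum_mul]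
  apply Finset.sum_congr rfl
  intro H _
  by_cases hQ : Q H
  · simp [hQ, hind u v huv W hu hv H]
  · simp [hQ]

lemma indep_Q_not (hind : EdgeSubgraphIndep μ) {u v : Fin n} (huv : u ≠ v)
    {W : Set (Fin n)} (hu : u ∉ W) (hv : v ∉ W) (Q : SimpleGraph W → Prop) :
    pr μ (fun G => Q (G.induce W) ∧ ¬ G.Adj u v)
      = pr μ (fun G => Q (G.induce W)) * (1 - pr μ (fun G => G.Adj u v)) := by
  have hs := pr_split μ (fun G => Q (G.induce W)) (fun G => G.Adj u v)
  have hi := indep_Q μ hind huv hu hv Q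
  have : pr μ (fun G => Q (G.induce W) ∧ ¬ G.Adj u v)
      = pr μ (fun G => Q (G.induce W)) - pr μ (fun G => Q (G.induce W)) * pr μ (fun G => G.Adj u v) := by
    linarith
  rw [this]; ring

end Aux

def pathEv (n k : ℕ) (G : SimpleGraph (Fin n)) : Prop :=
  ∀ i j : Fin n, (j : ℕ) = (i : ℕ) + 1 → (j : ℕ) ≤ k → G.Adj i j

def Qpath (n k : ℕ) (W : Set (Fin n)) (H : SimpleGraph W) : Prop :=
  ∀ i j : W, ((j : Fin n) : ℕ) = ((i : Fin n) : ℕ) + 1 → ((j : Fin n) : ℕ) ≤ k → H.Adj i j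

section Path

variable {n : ℕ}

lemma path_zero (G : SimpleGraph (Fin n)) : pathEv n 0 G ↔ True := by
  constructor
  · intro _; trivial
  · intro _ i j hji hj
    exact absurd hj (by omega)

lemma path_mono {k l : ℕ} (hkl : k ≤ l) {G : SimpleGraph (Fin n)}
    (h : pathEv n l G) : pathEv n k G :=
  fun i j hji hj => h i j hji (le_trans hj hkl)

lemma path_one (hn : 2 ≤ n) (G : SimpleGraph (Fin n)) :
    pathEv n 1 G ↔ G.Adj ⟨0, by omega⟩ ⟨1, by omega⟩ := by
  constructor
  · intro h; exact h ⟨0, by omega⟩ ⟨1, by omega⟩ rfl le_rfl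
  · intro hadj i j hji hj
    rcases i with ⟨iv, hiv⟩
    rcases j with ⟨jv, hjv⟩
    simp only at hji hj
    obtain rfl : iv = 0 := by omega
    obtain rfl : jv = 1 := by omega
    exact hadj

lemma path_succ {k : ℕ} (h2 : k + 2 < n) (G : SimpleGraph (Fin n)) :
    pathEv n (k+2) G ↔ pathEv n (k+1) G ∧ G.Adj ⟨k+1, by omega⟩ ⟨k+2, h2⟩ := by
  constructor
  · intro h
    exact ⟨fun i j hji hj => h i j hji (by omega), h ⟨k+1, by omega⟩ ⟨k+2, h2⟩ rfl le_rfl⟩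
  · rintro ⟨hp, ha⟩ i j hji hj
    by_cases hc : (j : ℕ) ≤ k + 1
    · exact hp i j hji hc
    · rcases i with ⟨iv, hiv⟩
      rcases j with ⟨jv, hjv⟩
      simp only at hji hj hc
      obtain rfl : jv = k + 2 := by omega
      obtain rfl : iv = k + 1 := by omega
      exact ha

lemma path_top {k : ℕ} (hk : n ≤ k + 2) {G : SimpleGraph (Fin n)}
    (h : pathEv n (k+1) G) : pathEv n (k+2) G := by
  intro i j hji hj
  have := j.isLt
  exact h i j hji (by omega)

lemma path_eq_Q (k : ℕ) (G : SimpleGraph (Fin n)) :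
    pathEv n k G ↔ Qpath n k {x : Fin n | (x : ℕ) ≤ k} (G.induce _) := by
  constructor
  · intro h i j hji hj
    exact h i j hji hj
  · intro h i j hji hj
    have hiW : i ∈ {x : Fin n | (x : ℕ) ≤ k} := by
      show (i : ℕ) ≤ k; omega
    have hjW : j ∈ {x : Fin n | (x : ℕ) ≤ k} := hj
    exact h ⟨i, hiW⟩ ⟨j, hjW⟩ hji hj

lemma path_connected (hn : 2 ≤ n) (G : SimpleGraph (Fin n))
    (h : pathEv n (n-1) G) : G.Connected := by
  have hn0 : 0 < n := by omega
  have key : ∀ m : ℕ, (hm : m < n) → G.Reachable ⟨0, hn0⟩ ⟨m, hm⟩ := by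
    intro m
    induction m with
    | zero => intro hm; exact SimpleGraph.Reachable.refl _
    | succ m ih =>
      intro hm
      have hadj : G.Adj ⟨m, by omega⟩ ⟨m+1, hm⟩ :=
        h ⟨m, by omega⟩ ⟨m+1, hm⟩ rfl (by omega)
      exact (ih (by omega)).trans hadj.reachable
  rw [SimpleGraph.connected_iff]
  refine ⟨fun u v => ?_, ⟨⟨0, hn0⟩⟩⟩
  have hu := key u.1 u.2
  have hv := key v.1 v.2
  simpa using hu.symm.trans hv

end Path

theorem connected_of_edge_subgraph_indep (n : ℕ) (hn : 2 ≤ n)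
    (μ : SimpleGraph (Fin n) → ℝ) (hμ : IsDist μ) (hind : EdgeSubgraphIndep μ)
    (hmarg : ∀ u v : Fin n, u ≠ v → 3 / 4 < pr μ (fun G => G.Adj u v)) :
    0 < pr μ (fun G => G.Connected) := by
  obtain ⟨hpos, hsum⟩ := hμ
  have hr0 : pr μ (pathEv n 0) = 1 := by
    rw [pr_congr μ (path_zero (n := n))]
    exact pr_true μ hsum
  have hB : ∀ k, 0 < pr μ (pathEv n k) ∧ pr μ (pathEv n k) ≤ 2 * pr μ (pathEv n (k+1)) := by
    intro k
    induction k with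
    | zero =>
      have h1 : pr μ (pathEv n 1) = pr μ (fun G => G.Adj ⟨0, by omega⟩ ⟨1, by omega⟩) :=
        pr_congr μ (path_one hn)
      have hα := hmarg ⟨0, by omega⟩ ⟨1, by omega⟩ (Fin.ne_of_val_ne (by simp))
      constructor
      · rw [hr0]; norm_num
      · rw [hr0, h1]; linarith
    | succ k ih =>
      obtain ⟨hk, hk1⟩ := ih
      have hk1pos : 0 < pr μ (pathEv n (k+1)) := by linarith
      refine ⟨hk1pos, ?_⟩
      by_cases hcase : k + 3 ≤ n
      · have hlt2 : k + 2 < n := by omega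
        set u : Fin n := ⟨k+1, by omega⟩ with hu_def
        set v : Fin n := ⟨k+2, hlt2⟩ with hv_def
        have huv : u ≠ v := Fin.ne_of_val_ne (by simp [hu_def, hv_def])
        have hα := hmarg u v huv
        have huW : u ∉ {x : Fin n | (x : ℕ) ≤ k} := by
          intro h; have : (u : ℕ) ≤ k := h; simp [hu_def] at this
        have hvW : v ∉ {x : Fin n | (x : ℕ) ≤ k} := by
          intro h; have : (v : ℕ) ≤ k := h; simp [hv_def] at this
        have e1 : pr μ (pathEv n (k+2))
            = pr μ (fun G => pathEv n (k+1) G ∧ G.Adj u v) :=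
          pr_congr μ (fun G => path_succ hlt2 G)
        have e2 := pr_split μ (pathEv n (k+1)) (fun G => G.Adj u v)
        have e3 : pr μ (fun G => pathEv n (k+1) G ∧ ¬ G.Adj u v)
            ≤ pr μ (fun G => pathEv n k G ∧ ¬ G.Adj u v) :=
          pr_mono μ hpos (fun G h => ⟨path_mono (by omega) h.1, h.2⟩)
        have e4 : pr μ (fun G => pathEv n k G ∧ ¬ G.Adj u v)
            = pr μ (pathEv n k) * (1 - pr μ (fun G => G.Adj u v)) := by
          have c1 : ∀ G : SimpleGraph (Fin n),
              (pathEv n k G ∧ ¬ G.Adj u v)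
                ↔ (Qpath n k {x : Fin n | (x : ℕ) ≤ k} (G.induce _) ∧ ¬ G.Adj u v) :=
            fun G => and_congr_left' (path_eq_Q k G)
          rw [pr_congr μ c1, indep_Q_not μ hind huv huW hvW (Qpath n k _),
            ← pr_congr μ (fun G => path_eq_Q k G)]
        have p1 : pr μ (pathEv n k) * (1 - pr μ (fun G => G.Adj u v))
            < pr μ (pathEv n k) * (1/4) := by
          apply mul_lt_mul_of_pos_left (by linarith) hk
        have p2 : pr μ (pathEv n k) * (1/4) ≤ pr μ (pathEv n (k+1)) / 2 := by linarith
        linarith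
      · have heq : pr μ (pathEv n (k+2)) = pr μ (pathEv n (k+1)) :=
          pr_congr μ (fun G => ⟨path_mono (by omega), path_top (by omega)⟩)
        rw [heq]; linarith
  have hfin : 0 < pr μ (pathEv n (n-1)) := (hB (n-1)).1
  have hle : pr μ (pathEv n (n-1)) ≤ pr μ (fun G => G.Connected) :=
    pr_mono μ hpos (fun G h => path_connected hn G h)
  linarith
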